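/- Under the model y_i | θ_i ~ N(θ_i, V) independently and θ_i ~ N(x_i^T β, A) independently for i=1,...,m, with flat prior π(β)=1 and V, A > 0 known, the posterior distribution of θ = (θ_1,...,θ_m)^T given y is multivariate normal with mean (1-B)y + B P_X y and covariance matrix V((1-B)I_m + B P_X), where B = V/(V+A) and P_X = X(X^T X)^{-1} X^T with X = (x_1,...,x_m)^T of full column rank p < m. -/

import Mathlib

open Matrix MeasureTheory Real

noncomputable def projX {m p : ℕ} (X : Matrix (Fin m) (Fin p) ℝ) : Matrix (Fin m) (Fin m) ℝ :=
  X * (Xᵀ * X)⁻¹ * Xᵀ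

/-- Density of the multivariate normal distribution `N(μ, Σ)` on `ℝ^n`. -/
noncomputable def mvGaussPdf {n : ℕ} (μ : Fin n → ℝ) (S : Matrix (Fin n) (Fin n) ℝ)
    (x : Fin n → ℝ) : ℝ :=
  (2 * π) ^ (-(n : ℝ) / 2) * S.det ^ (-(1 : ℝ) / 2) *
    Real.exp (-((x - μ) ⬝ᵥ S⁻¹.mulVec (x - μ)) / 2)

/-!
Integrating out `β`: shifting `β` by the least-squares estimate `(XᵀX)⁻¹Xᵀθ` splits
`‖θ - Xβ‖²` orthogonally as `‖θ - P_X θ‖² + ‖Xβ‖²`, so the `β`-integral is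
`exp (-‖θ - P_X θ‖² / 2A)` times a constant, finite and positive because `X` is injective.
What remains is the exponent `-‖y - θ‖² / 2V - ‖θ - P_X θ‖² / 2A`. Since `P_X` is a symmetric
idempotent, `(a I + b P_X)⁻¹ = a⁻¹ I - b / (a (a + b)) P_X`, and completing the square in `θ`
turns this exponent into that of `N((1 - B) y + B P_X y, V ((1 - B) I + B P_X))` plus a term
depending on `y` alone.
-/

theorem integrable_exp_neg_of_mul_dotProduct_self_le {ι : Type*} [Fintype ι]
    {Q : (ι → ℝ) → ℝ} (hQ : Continuous Q) {c : ℝ} (hc : 0 < c)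
    (hle : ∀ v, c * (v ⬝ᵥ v) ≤ Q v) : Integrable fun v => Real.exp (-Q v) := by
  refine (Integrable.fintype_prod fun _ => integrable_exp_neg_mul_sq hc).mono
    (by fun_prop) (ae_of_all _ fun v => ?_)
  rw [norm_of_nonneg (exp_pos _).le, norm_of_nonneg (by positivity), ← exp_sum, exp_le_exp]
  have : ∑ i, -c * v i ^ 2 = -(c * (v ⬝ᵥ v)) := by
    simp only [dotProduct, Finset.mul_sum, ← Finset.sum_neg_distrib, sq, neg_mul]
  linarith [hle v]

theorem EuclideanSpace.norm_toLp_sq {n : Type*} [Fintype n] (v : n → ℝ) :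
    ‖WithLp.toLp 2 v‖ ^ 2 = v ⬝ᵥ v := by
  rw [EuclideanSpace.real_norm_sq_eq, dotProduct]
  simp [sq]

namespace Matrix

variable {m n : Type*} [Fintype m] [Fintype n]

omit [Fintype m] in
theorem mulVec_injective_of_rank_eq_card {K : Type*} [Field K] {X : Matrix m n K}
    (hX : X.rank = Fintype.card n) : Function.Injective X.mulVec := by
  have h := X.mulVecLin.finrank_range_add_finrank_ker
  rw [← rank, hX, Module.finrank_fintype_fun_eq_card, add_eq_left,
    Submodule.finrank_eq_zero, LinearMap.ker_eq_bot] at h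
  exact h

theorem exists_pos_mul_dotProduct_self_le {X : Matrix m n ℝ} (hX : Function.Injective X.mulVec) :
    ∃ c > 0, ∀ v : n → ℝ, c * (v ⬝ᵥ v) ≤ X *ᵥ v ⬝ᵥ X *ᵥ v := by
  classical
  obtain ⟨K, hK, hKX⟩ := (toEuclideanLin X).exists_antilipschitzWith
    (LinearMap.ker_eq_bot.mpr fun v w h => WithLp.ofLp_injective 2 (hX (congrArg WithLp.ofLp h)))
  refine ⟨((K : ℝ) ^ 2)⁻¹, by positivity, fun v => ?_⟩
  have hv := hKX.le_mul_dist (WithLp.toLp 2 v) 0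
  simp only [dist_zero_right, map_zero] at hv
  rw [inv_mul_le_iff₀ (by positivity), ← EuclideanSpace.norm_toLp_sq,
    ← EuclideanSpace.norm_toLp_sq, ← mul_pow]
  exact pow_le_pow_left₀ (norm_nonneg _) hv 2

theorem integral_exp_neg_dotProduct_mulVec_pos {X : Matrix m n ℝ}
    (hX : Function.Injective X.mulVec) {s : ℝ} (hs : 0 < s) :
    0 < ∫ β, exp (-(X *ᵥ β ⬝ᵥ X *ᵥ β) / s) := by
  obtain ⟨c, hc, hle⟩ := exists_pos_mul_dotProduct_self_le hX
  simp_rw [neg_div]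
  refine integral_exp_pos (integrable_exp_neg_of_mul_dotProduct_self_le (by fun_prop)
    (div_pos hc hs) fun v => ?_)
  rw [div_mul_eq_mul_div]
  exact div_le_div_of_nonneg_right (hle v) hs.le

theorem isUnit_det_transpose_mul_self [DecidableEq n] {X : Matrix m n ℝ}
    (hX : Function.Injective X.mulVec) : IsUnit (Xᵀ * X).det := by
  have h := PosDef.conjTranspose_mul_self X hX
  rw [conjTranspose_eq_transpose_of_trivial] at h
  exact (isUnit_iff_isUnit_det _).mp h.isUnit

theorem dotProduct_self_sub_mulVec_of_transpose_mulVec_eq_zero {R : Type*} [CommRing R]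
    {X : Matrix m n R} {r : m → R} (hr : Xᵀ *ᵥ r = 0) (β : n → R) :
    (r - X *ᵥ β) ⬝ᵥ (r - X *ᵥ β) = r ⬝ᵥ r + X *ᵥ β ⬝ᵥ X *ᵥ β := by
  have horth : r ⬝ᵥ X *ᵥ β = 0 := by rw [dotProduct_mulVec, ← mulVec_transpose, hr, zero_dotProduct]
  rw [sub_dotProduct, dotProduct_sub, dotProduct_sub, dotProduct_comm (X *ᵥ β) r, horth]
  ring

theorem inv_smul_one_add_smul_of_mul_self [DecidableEq n] {K : Type*} [Field K] {P : Matrix n n K}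
    (hP : P * P = P) {a b : K} (ha : a ≠ 0) (hab : a + b ≠ 0) :
    (a • 1 + b • P)⁻¹ = a⁻¹ • 1 - (b / (a * (a + b))) • P := by
  refine inv_eq_right_inv ?_
  simp only [Matrix.add_mul, Matrix.mul_sub, Matrix.smul_mul, Matrix.mul_smul, Matrix.one_mul,
    Matrix.mul_one, hP]
  have hcoef : b * a⁻¹ - a * (b / (a * (a + b))) - b * (b / (a * (a + b))) = 0 := by
    field_simp
    ring
  rw [← sub_eq_zero]
  calc _ = (a * a⁻¹ - 1) • (1 : Matrix n n K)
        + (b * a⁻¹ - a * (b / (a * (a + b))) - b * (b / (a * (a + b)))) • P := by module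
    _ = 0 := by rw [mul_inv_cancel₀ ha, hcoef, sub_self, zero_smul, zero_smul, add_zero]

omit [Fintype n] in
theorem posDef_smul_one_add_smul [DecidableEq n] {P : Matrix n n ℝ} (hP : P.PosSemidef) {a b : ℝ} (ha : 0 < a)
    (hb : 0 ≤ b) : (a • 1 + b • P).PosDef :=
  (PosDef.one.smul ha).add_posSemidef (hP.smul hb)

end Matrix

theorem likelihood_exponent_eq_posterior_exponent {n : Type*} [Fintype n] [DecidableEq n]
    {P : Matrix n n ℝ} (hPt : Pᵀ = P) (hP : P * P = P)
    {V A B : ℝ} (hV : 0 < V) (hA : 0 < A) (hB : B = V / (V + A)) (y θ : n → ℝ) :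
    -((y - θ) ⬝ᵥ (y - θ)) / (2 * V) + -((θ - P *ᵥ θ) ⬝ᵥ (θ - P *ᵥ θ)) / (2 * A)
      = -(y ⬝ᵥ (y - P *ᵥ y)) / (2 * (V + A))
        + -((θ - ((1 - B) • y + B • P *ᵥ y)) ⬝ᵥ
            (V • ((1 - B) • 1 + B • P))⁻¹ *ᵥ (θ - ((1 - B) • y + B • P *ᵥ y))) / 2 := by
  subst hB
  have hVA : 0 < V + A := by positivity
  have hcov : V • ((1 - V / (V + A)) • (1 : Matrix n n ℝ) + (V / (V + A)) • P)
      = (V * A / (V + A)) • 1 + (V * V / (V + A)) • P := by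
    rw [one_sub_div hVA.ne', add_sub_cancel_left, smul_add, smul_smul, smul_smul, mul_div_assoc',
      mul_div_assoc']
  have hsum : V * A / (V + A) + V * V / (V + A) = V := by field_simp; ring
  rw [hcov, inv_smul_one_add_smul_of_mul_self hP (by positivity) (by rw [hsum]; positivity), hsum]
  have hidem : ∀ v, P *ᵥ P *ᵥ v = P *ᵥ v := fun v => by rw [mulVec_mulVec, hP]
  have hsymm : ∀ u w, P *ᵥ u ⬝ᵥ w = u ⬝ᵥ P *ᵥ w := fun u w => by
    rw [dotProduct_mulVec, ← mulVec_transpose, hPt, dotProduct_comm]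
  have hyθ : y ⬝ᵥ P *ᵥ θ = θ ⬝ᵥ P *ᵥ y := by rw [← hsymm, dotProduct_comm]
  -- Both sides are now polynomials in the six numbers `θ ⬝ᵥ θ`, `θ ⬝ᵥ P *ᵥ θ`, `θ ⬝ᵥ y`,
  -- `θ ⬝ᵥ P *ᵥ y`, `y ⬝ᵥ y`, `y ⬝ᵥ P *ᵥ y`.
  simp only [sub_mulVec, smul_mulVec, one_mulVec, mulVec_sub, mulVec_add,
    mulVec_smul, hidem, dotProduct_sub, sub_dotProduct, dotProduct_add, add_dotProduct,
    dotProduct_smul, smul_dotProduct, smul_eq_mul, hsymm, hyθ, dotProduct_comm y θ]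
  field_simp
  ring

section projX

variable {m p : ℕ} (X : Matrix (Fin m) (Fin p) ℝ)

theorem transpose_projX : (projX X)ᵀ = projX X := by
  rw [projX, transpose_mul, transpose_mul, transpose_transpose, transpose_nonsing_inv,
    transpose_mul, transpose_transpose, Matrix.mul_assoc]

theorem posSemidef_projX : (projX X).PosSemidef := by
  have h := (posSemidef_conjTranspose_mul_self X).inv.mul_mul_conjTranspose_same X
  rwa [conjTranspose_eq_transpose_of_trivial] at h

variable {X}

theorem transpose_mul_projX (hX : Function.Injective X.mulVec) : Xᵀ * projX X = Xᵀ := by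
  rw [projX, ← Matrix.mul_assoc, ← Matrix.mul_assoc,
    mul_nonsing_inv _ (isUnit_det_transpose_mul_self hX), Matrix.one_mul]

theorem projX_mul_self (hX : Function.Injective X.mulVec) : projX X * projX X = projX X := by
  change X * (Xᵀ * X)⁻¹ * Xᵀ * projX X = projX X
  rw [Matrix.mul_assoc, transpose_mul_projX hX]
  rfl

theorem transpose_mulVec_sub_projX_mulVec (hX : Function.Injective X.mulVec) (θ : Fin m → ℝ) :
    Xᵀ *ᵥ (θ - projX X *ᵥ θ) = 0 := by
  rw [mulVec_sub, mulVec_mulVec, transpose_mul_projX hX, sub_self]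

theorem integral_exp_neg_dotProduct_sub_mulVec (hX : Function.Injective X.mulVec) (s : ℝ)
    (θ : Fin m → ℝ) :
    ∫ β, exp (-((θ - X *ᵥ β) ⬝ᵥ (θ - X *ᵥ β)) / s)
      = exp (-((θ - projX X *ᵥ θ) ⬝ᵥ (θ - projX X *ᵥ θ)) / s)
        * ∫ β, exp (-(X *ᵥ β ⬝ᵥ X *ᵥ β) / s) := by
  set r := θ - projX X *ᵥ θ
  set βhat := (Xᵀ * X)⁻¹ *ᵥ (Xᵀ *ᵥ θ)
  have hsplit : ∀ β, θ - X *ᵥ (β + βhat) = r - X *ᵥ β := fun β => by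
    rw [mulVec_add, mulVec_mulVec, mulVec_mulVec]
    simp only [r, projX]
    abel
  rw [← integral_const_mul, ← integral_add_right_eq_self _ βhat]
  congr 1 with β
  rw [hsplit, dotProduct_self_sub_mulVec_of_transpose_mulVec_eq_zero
    (transpose_mulVec_sub_projX_mulVec hX θ), ← exp_add]
  congr 1
  ring

end projX

theorem prod_const_mul_exp_neg_sq_sub_div {ι : Type*} [Fintype ι] (k s : ℝ) (a b : ι → ℝ) :
    ∏ i, k * exp (-(a i - b i) ^ 2 / s) = k ^ Fintype.card ι * exp (-((a - b) ⬝ᵥ (a - b)) / s) := by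
  rw [Finset.prod_mul_distrib, Finset.prod_const, Finset.card_univ, ← exp_sum, dotProduct,
    ← Finset.sum_div, ← Finset.sum_neg_distrib]
  simp only [Pi.sub_apply, sq]

theorem exp_neg_dotProduct_inv_mulVec_div_two {n : ℕ} (μ x : Fin n → ℝ)
    {S : Matrix (Fin n) (Fin n) ℝ} (hS : 0 < S.det) :
    exp (-((x - μ) ⬝ᵥ S⁻¹ *ᵥ (x - μ)) / 2)
      = (2 * π) ^ ((n : ℝ) / 2) * S.det ^ ((1 : ℝ) / 2) * mvGaussPdf μ S x := by
  rw [mvGaussPdf, neg_div 2 (n : ℝ), rpow_neg (by positivity), neg_div 2 (1 : ℝ), rpow_neg hS.le]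
  field_simp

theorem statement0_general {m p : ℕ} (X : Matrix (Fin m) (Fin p) ℝ) (hX : X.rank = p)
    (V A : ℝ) (hV : 0 < V) (hA : 0 < A) (B : ℝ) (hB : B = V / (V + A))
    (y : Fin m → ℝ) :
    ∃ c > 0, ∀ θ : Fin m → ℝ,
      (∫ β : Fin p → ℝ,
          (∏ i, (Real.sqrt (2 * π * V))⁻¹ * Real.exp (-(y i - θ i) ^ 2 / (2 * V))) *
          (∏ i, (Real.sqrt (2 * π * A))⁻¹ *
            Real.exp (-(θ i - X.mulVec β i) ^ 2 / (2 * A))))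
        = c * mvGaussPdf
            (fun i => (1 - B) * y i + B * (projX X).mulVec y i)
            (V • ((1 - B) • (1 : Matrix (Fin m) (Fin m) ℝ) + B • projX X)) θ := by
  have hXinj : Function.Injective X.mulVec :=
    mulVec_injective_of_rank_eq_card (by rw [hX, Fintype.card_fin])
  have hS : 0 < (V • ((1 - B) • (1 : Matrix (Fin m) (Fin m) ℝ) + B • projX X)).det := by
    have hB01 : 0 < B ∧ B < 1 := by
      rw [hB]; exact ⟨by positivity, (div_lt_one (by positivity)).mpr (by linarith)⟩
    rw [smul_add, smul_smul, smul_smul]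
    exact (posDef_smul_one_add_smul (posSemidef_projX X) (mul_pos hV (sub_pos.mpr hB01.2))
      (mul_pos hV hB01.1).le).det_pos
  obtain ⟨I, hI⟩ : ∃ I, ∫ β, exp (-(X *ᵥ β ⬝ᵥ X *ᵥ β) / (2 * A)) = I := ⟨_, rfl⟩
  have hIpos : 0 < I := hI ▸ integral_exp_neg_dotProduct_mulVec_pos hXinj (by positivity)
  refine ⟨(√(2 * π * V))⁻¹ ^ m * (√(2 * π * A))⁻¹ ^ m * I * (2 * π) ^ ((m : ℝ) / 2)
    * (V • ((1 - B) • 1 + B • projX X)).det ^ ((1 : ℝ) / 2)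
    * exp (-(y ⬝ᵥ (y - projX X *ᵥ y)) / (2 * (V + A))), by positivity, fun θ => ?_⟩
  change _ = _ * mvGaussPdf ((1 - B) • y + B • projX X *ᵥ y) _ θ
  simp_rw [prod_const_mul_exp_neg_sq_sub_div, Fintype.card_fin]
  rw [integral_const_mul, integral_const_mul, integral_exp_neg_dotProduct_sub_mulVec hXinj, hI]
  calc _ = (√(2 * π * V))⁻¹ ^ m * (√(2 * π * A))⁻¹ ^ m * I * exp (-((y - θ) ⬝ᵥ (y - θ)) / (2 * V)
        + -((θ - projX X *ᵥ θ) ⬝ᵥ (θ - projX X *ᵥ θ)) / (2 * A)) := by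
        rw [exp_add]; ring
    _ = _ := by
      rw [likelihood_exponent_eq_posterior_exponent (transpose_projX X) (projX_mul_self hXinj)
        hV hA hB, exp_add, exp_neg_dotProduct_inv_mulVec_div_two _ _ hS]
      ring

/-- Under `y_i | θ_i ~ N(θ_i, V)`, `θ_i ~ N(x_iᵀβ, A)` independently, with flat
prior `π(β) = 1` and `V, A > 0` known, the posterior of `θ` given `y` (obtained by
integrating the likelihood times prior over `β`) is multivariate normal with mean
`(1-B) y + B P_X y` and covariance `V((1-B) I_m + B P_X)`, where `B = V/(V+A)` and
`P_X = X(XᵀX)⁻¹Xᵀ`, `X` of full column rank `p < m`. -/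
theorem statement0 {m p : ℕ} (hpm : p < m) (X : Matrix (Fin m) (Fin p) ℝ) (hX : X.rank = p)
    (V A : ℝ) (hV : 0 < V) (hA : 0 < A) (B : ℝ) (hB : B = V / (V + A))
    (y : Fin m → ℝ) :
    ∃ c > 0, ∀ θ : Fin m → ℝ,
      (∫ β : Fin p → ℝ,
          (∏ i, (Real.sqrt (2 * π * V))⁻¹ * Real.exp (-(y i - θ i) ^ 2 / (2 * V))) *
          (∏ i, (Real.sqrt (2 * π * A))⁻¹ *
            Real.exp (-(θ i - X.mulVec β i) ^ 2 / (2 * A))))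
        = c * mvGaussPdf
            (fun i => (1 - B) * y i + B * (projX X).mulVec y i)
            (V • ((1 - B) • (1 : Matrix (Fin m) (Fin m) ℝ) + B • projX X)) θ :=
  statement0_general X hX V A hV hA B hB y
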